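/- For any type (alphabet) α, the free group FreeGroup α is residually nilpotent: the intersection over all d ≥ 1 of the lower central series subgroups Γ_d(FreeGroup α) is the trivial subgroup. -/

import Mathlib

/-!
Magnus' argument. Let the letters of a word `E` spell `W`, with no two adjacent letters of `W`
equal. Send each generator `a` to `1 + X_a` in `ℤ⟨X⟩` modulo the words that are not factors of
`W`. There `X_a ^ 2 = 0`, so `1 + X_a` is a unit with inverse `1 - X_a`, and the image of `mk E`
has coefficient `±1` at `W`. On the other hand, commutators raise the order of `u - 1`, so
`Γ_{d+1}` is sent into `1 + (degree ≥ d + 1)`, which is `1` once `d ≥ |W|`. Hence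
`mk E ∉ Γ_{|W|+1}`. The substitution `a ↦ a' a''` turns every nonempty reduced word into such
an `E`.
-/

open scoped Pointwise commutatorElement

/-- Modelled on the powers `F d = I ^ d` of a two-sided ideal `I`. -/
structure IsMulFiltration {R : Type*} [Ring R] (F : ℕ → AddSubgroup R) : Prop where
  mem_zero (a : R) : a ∈ F 0
  mul_mem {d e : ℕ} {a b : R} : a ∈ F d → b ∈ F e → a * b ∈ F (d + e)

namespace IsMulFiltration

variable {R : Type*} [Ring R] {F : ℕ → AddSubgroup R}

theorem mul_mem_left (hF : IsMulFiltration F) {d : ℕ} (a : R) {b : R} (hb : b ∈ F d) :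
    a * b ∈ F d := by
  simpa using hF.mul_mem (hF.mem_zero a) hb

theorem mul_mem_right (hF : IsMulFiltration F) {d : ℕ} {a : R} (ha : a ∈ F d) (b : R) :
    a * b ∈ F d :=
  hF.mul_mem ha (hF.mem_zero b)

def unitsSubgroup (hF : IsMulFiltration F) (d : ℕ) : Subgroup Rˣ where
  carrier := {u | (u : R) - 1 ∈ F d}
  one_mem' := by simp
  mul_mem' {u v} hu hv := by
    have h : ((u * v : Rˣ) : R) - 1 = ((u : R) - 1) * v + ((v : R) - 1) := by
      push_cast; noncomm_ring
    simpa only [Set.mem_ofPred_eq, h] using add_mem (hF.mul_mem_right hu _) hv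
  inv_mem' {u} hu := by
    have h : ((u⁻¹ : Rˣ) : R) - 1 = -(((u⁻¹ : Rˣ) : R) * ((u : R) - 1)) := by
      rw [mul_sub, Units.inv_mul, mul_one, neg_sub]
    simpa only [Set.mem_ofPred_eq, h] using neg_mem (hF.mul_mem_left _ hu)

theorem mem_unitsSubgroup (hF : IsMulFiltration F) {d : ℕ} {u : Rˣ} :
    u ∈ hF.unitsSubgroup d ↔ (u : R) - 1 ∈ F d := Iff.rfl

theorem commutatorElement_mem_unitsSubgroup (hF : IsMulFiltration F) {d e : ℕ} {u v : Rˣ}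
    (hu : u ∈ hF.unitsSubgroup d) (hv : v ∈ hF.unitsSubgroup e) :
    ⁅u, v⁆ ∈ hF.unitsSubgroup (d + e) := by
  have h : ((⁅u, v⁆ : Rˣ) : R) - 1 =
      (((u : R) - 1) * ((v : R) - 1) - ((v : R) - 1) * ((u : R) - 1)) *
        ((u⁻¹ : Rˣ) * (v⁻¹ : Rˣ) : R) := by
    have hcomm : ((u : R) - 1) * ((v : R) - 1) - ((v : R) - 1) * ((u : R) - 1) =
        u * v - v * u := by
      noncomm_ring
    rw [hcomm, sub_mul, commutatorElement_def]
    simp [mul_assoc]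
  rw [mem_unitsSubgroup, h]
  refine hF.mul_mem_right (sub_mem (hF.mul_mem hu hv) ?_) _
  rw [add_comm]
  exact hF.mul_mem hv hu

theorem sub_one_mem_of_mem_lowerCentralSeries (hF : IsMulFiltration F) {G : Type*} [Group G]
    (f : G →* Rˣ) (hf : ∀ g, (f g : R) - 1 ∈ F 1) {d : ℕ} {x : G}
    (hx : x ∈ (⊤ : Subgroup G).lowerCentralSeries d) : (f x : R) - 1 ∈ F (d + 1) :=
  Subgroup.descending_central_series_ge_lower (fun n ↦ (hF.unitsSubgroup (n + 1)).comap f)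
    ⟨eq_top_iff.mpr fun g _ ↦ hf g, fun y n hy g ↦ by
      simpa only [Subgroup.mem_comap, map_commutatorElement, add_right_comm n 1 1] using
        hF.commutatorElement_mem_unitsSubgroup hy (hf g)⟩ d hx

theorem map {S : Type*} [Ring S] (hF : IsMulFiltration F) (f : R →+* S)
    (hf : Function.Surjective f) : IsMulFiltration fun d ↦ (F d).map f.toAddMonoidHom where
  mem_zero b := by
    obtain ⟨a, rfl⟩ := hf b
    exact ⟨a, hF.mem_zero a, rfl⟩
  mul_mem := by
    rintro d e _ _ ⟨a, ha, rfl⟩ ⟨b, hb, rfl⟩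
    exact ⟨a * b, hF.mul_mem ha hb, map_mul f a b⟩

end IsMulFiltration

namespace MonoidAlgebra

theorem mul_mem_supported {R M : Type*} [Ring R] [Monoid M] {s t : Set M}
    {x y : MonoidAlgebra R M} (hx : x ∈ supported ℤ R s) (hy : y ∈ supported ℤ R t) :
    x * y ∈ supported ℤ R (s * t) := by
  classical
  rw [mem_supported] at hx hy ⊢
  refine (Finset.coe_subset.mpr (support_coeff_mul_subset x y)).trans ?_
  rw [Finset.coe_mul]
  exact Set.mul_subset_mul hx hy

end MonoidAlgebra

open MonoidAlgebra

namespace FreeMonoid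

variable {R : Type*} [Ring R] {γ : Type*}

variable (R γ) in
noncomputable def degreeFiltration (d : ℕ) :
    AddSubgroup (MonoidAlgebra R (FreeMonoid γ)) :=
  (supported ℤ R {w : FreeMonoid γ | d ≤ w.length}).toAddSubgroup

variable (R) in
theorem isMulFiltration_degreeFiltration : IsMulFiltration (degreeFiltration R γ) where
  mem_zero x := mem_supported.mpr fun w _ ↦ Nat.zero_le _
  mul_mem {d e _ _} ha hb := by
    refine supported_mono ?_ (mul_mem_supported ha hb)
    rintro _ ⟨u, hu, v, hv, rfl⟩
    simp only [Set.mem_ofPred_eq, length_mul] at hu hv ⊢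
    omega

theorem prod_one_add_single_mem_supported (L : List (γ × R)) :
    (L.map fun p : γ × R ↦ 1 + single (of p.1) p.2).prod ∈
      supported ℤ R {w : FreeMonoid γ | w.length ≤ L.length} := by
  classical
  have hone (n : ℕ) :
      (1 : MonoidAlgebra R (FreeMonoid γ)) ∈ supported ℤ R {w | w.length ≤ n} :=
    mem_supported.mpr fun w hw ↦ by
      simp [Finset.mem_one.mp (support_coeff_one_subset hw)]
  induction L with
  | nil => exact hone 0
  | cons p L ih =>
    have hp : 1 + single (of p.1) p.2 ∈ supported ℤ R {w : FreeMonoid γ | w.length ≤ 1} :=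
      add_mem (hone 1) (mem_supported.mpr fun w hw ↦ by
        simp [Finset.mem_singleton.mp (Finsupp.support_single_subset hw)])
    rw [List.map_cons, List.prod_cons]
    refine supported_mono ?_ (mul_mem_supported hp ih)
    rintro _ ⟨u, hu, v, hv, rfl⟩
    simp only [Set.mem_ofPred_eq, length_mul, List.length_cons] at hu hv ⊢
    omega

theorem coeff_prod_one_add_single (L : List (γ × R)) :
    (L.map fun p : γ × R ↦ 1 + single (of p.1) p.2).prod.coeff (ofList (L.map Prod.fst)) =
      (L.map Prod.snd).prod := by
  induction L with
  | nil => exact coeff_one_one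
  | cons p L ih =>
    have hlen : L.length < (of p.1 * ofList (L.map Prod.fst)).length := by
      rw [length_mul, length_of]
      exact Nat.lt_one_add_iff.mpr (List.length_map _).ge
    rw [List.map_cons, List.prod_cons, List.map_cons, ofList_cons, add_mul, one_mul, coeff_add,
      Finsupp.add_apply, coeff_single_mul_mul, ih, List.map_cons, List.prod_cons,
      mem_supported'.mp (prod_one_add_single_mem_supported L) _ (not_le.mpr hlen), zero_add]

variable (R) in
noncomputable def nonInfixIdeal (W : List γ) : TwoSidedIdeal (MonoidAlgebra R (FreeMonoid γ)) :=
  .mk' (supported ℤ R {w : FreeMonoid γ | ¬ w.toList <:+: W})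
    (zero_mem _) (fun hx hy ↦ add_mem hx hy) (fun hx ↦ neg_mem hx)
    (fun {x _} hy ↦ by
      refine supported_mono ?_ (mul_mem_supported (mem_supported.mpr (Set.subset_univ _)) hy)
      rintro _ ⟨u, -, v, hv, rfl⟩ h
      exact hv ((List.suffix_append u.toList v.toList).isInfix.trans h))
    (fun {_ y} hx ↦ by
      refine supported_mono ?_ (mul_mem_supported hx (mem_supported.mpr (Set.subset_univ _)))
      rintro _ ⟨u, hu, v, -, rfl⟩ h
      exact hu ((List.prefix_append u.toList v.toList).isInfix.trans h))

theorem mem_nonInfixIdeal {W : List γ} {p : MonoidAlgebra R (FreeMonoid γ)} :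
    p ∈ nonInfixIdeal R W ↔ ∀ w : FreeMonoid γ, w.toList <:+: W → p.coeff w = 0 := by
  rw [nonInfixIdeal, TwoSidedIdeal.mem_mk', SetLike.mem_coe, mem_supported']
  simp only [Set.mem_ofPred_eq, not_not]

theorem mem_nonInfixIdeal_of_mem_degreeFiltration {W : List γ}
    {p : MonoidAlgebra R (FreeMonoid γ)} (hp : p ∈ degreeFiltration R γ (W.length + 1)) :
    p ∈ nonInfixIdeal R W :=
  mem_nonInfixIdeal.mpr fun w hw ↦
    mem_supported'.mp hp w (not_le.mpr (Nat.lt_succ_of_le hw.length_le))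

variable (R) in
abbrev InfixQuotient (W : List γ) : Type _ :=
  MonoidAlgebra R (FreeMonoid γ) ⧸ (nonInfixIdeal R W).asIdeal

variable (R) in
noncomputable def infixQuotientFiltration (W : List γ) (d : ℕ) :
    AddSubgroup (InfixQuotient R W) :=
  (degreeFiltration R γ d).map (Ideal.Quotient.mk (nonInfixIdeal R W).asIdeal).toAddMonoidHom

variable (R) in
theorem isMulFiltration_infixQuotientFiltration (W : List γ) :
    IsMulFiltration (infixQuotientFiltration R W) :=
  (isMulFiltration_degreeFiltration R).map _ Ideal.Quotient.mk_surjective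

theorem infixQuotientFiltration_length_add_one (W : List γ) :
    infixQuotientFiltration R W (W.length + 1) = ⊥ := by
  refine (AddSubgroup.map_eq_bot_iff _).mpr fun p hp ↦ ?_
  exact Ideal.Quotient.eq_zero_iff_mem.mpr (mem_nonInfixIdeal_of_mem_degreeFiltration hp)

theorem mk_single_mul_self_eq_zero {W : List γ} (hW : W.IsChain (· ≠ ·)) (a : γ) :
    Ideal.Quotient.mk (nonInfixIdeal R W).asIdeal (single (of a) 1) *
      Ideal.Quotient.mk (nonInfixIdeal R W).asIdeal (single (of a) 1) = 0 := by
  classical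
  rw [← _root_.map_mul, Ideal.Quotient.eq_zero_iff_mem, TwoSidedIdeal.mem_asIdeal,
    mem_nonInfixIdeal, single_mul_single]
  intro w hw
  rw [coeff_single, Finsupp.single_apply, if_neg]
  rintro rfl
  simpa using hW.infix hw

end FreeMonoid

namespace FreeGroup

open FreeMonoid

section Magnus

variable {R : Type*} [Ring R] {γ : Type*} {W : List γ}

variable (R) in
noncomputable def magnusUnit (hW : W.IsChain (· ≠ ·)) (a : γ) : (InfixQuotient R W)ˣ where
  val := 1 + Ideal.Quotient.mk _ (single (FreeMonoid.of a) 1)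
  inv := 1 - Ideal.Quotient.mk _ (single (FreeMonoid.of a) 1)
  val_inv := by simp [mul_sub, add_mul, mk_single_mul_self_eq_zero hW]
  inv_val := by simp [sub_mul, mul_add, mk_single_mul_self_eq_zero hW]

variable (R) in
noncomputable def magnusHom (hW : W.IsChain (· ≠ ·)) :
    FreeGroup γ →* (InfixQuotient R W)ˣ :=
  lift (magnusUnit R hW)

theorem magnusHom_sub_one_mem (hW : W.IsChain (· ≠ ·)) (g : FreeGroup γ) :
    (magnusHom R hW g : InfixQuotient R W) - 1 ∈ infixQuotientFiltration R W 1 := by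
  refine range_lift_le (s := (isMulFiltration_infixQuotientFiltration R W).unitsSubgroup 1) ?_
    ⟨g, rfl⟩
  rintro _ ⟨a, rfl⟩
  refine ⟨single (FreeMonoid.of a) 1, mem_supported.mpr fun w hw ↦ ?_, by simp [magnusUnit]⟩
  rw [Finset.mem_coe, coeff_single, Finsupp.mem_support_single] at hw
  simp [hw.1]

theorem magnusHom_eq_one_of_mem_lowerCentralSeries (hW : W.IsChain (· ≠ ·)) {x : FreeGroup γ}
    (hx : x ∈ (⊤ : Subgroup (FreeGroup γ)).lowerCentralSeries W.length) :
    magnusHom R hW x = 1 := by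
  have h := (isMulFiltration_infixQuotientFiltration R W).sub_one_mem_of_mem_lowerCentralSeries
    _ (magnusHom_sub_one_mem hW) hx
  rw [infixQuotientFiltration_length_add_one, AddSubgroup.mem_bot, sub_eq_zero] at h
  exact Units.ext h

theorem magnusHom_mk (hW : W.IsChain (· ≠ ·)) (E : List (γ × Bool)) :
    (magnusHom R hW (mk E) : InfixQuotient R W) = Ideal.Quotient.mk _
      (E.map fun p : γ × Bool ↦ 1 + single (FreeMonoid.of p.1) (cond p.2 1 (-1))).prod := by
  rw [magnusHom, lift_mk, ← Units.coeHom_apply, map_list_prod, map_list_prod, List.map_map,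
    List.map_map]
  congr 1
  refine List.map_congr_left fun ⟨a, b⟩ _ ↦ ?_
  cases b
  · simp [magnusUnit, sub_eq_add_neg]
  · simp [magnusUnit]

theorem magnusHom_mk_ne_one [Nontrivial R] {E : List (γ × Bool)}
    (hE : (E.map Prod.fst).IsChain (· ≠ ·)) (hne : E ≠ []) : magnusHom R hE (mk E) ≠ 1 := by
  classical
  intro h
  have hone := congrArg Units.val h
  rw [Units.val_one, magnusHom_mk, Ideal.Quotient.mk_eq_one_iff_sub_mem,
    TwoSidedIdeal.mem_asIdeal, mem_nonInfixIdeal] at hone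
  have hW := hone (ofList (E.map Prod.fst)) (List.infix_refl _)
  have hL := coeff_prod_one_add_single (E.map fun p : γ × Bool ↦ (p.1, cond p.2 (1 : R) (-1)))
  simp only [List.map_map, Function.comp_def] at hL
  have hW1 : (1 : FreeMonoid γ) ≠ ofList (E.map Prod.fst) :=
    fun h ↦ hne (by simpa using congrArg toList h)
  rw [coeff_sub, Finsupp.sub_apply, hL, one_def, coeff_single, Finsupp.single_apply, if_neg hW1,
    sub_zero] at hW
  refine (List.prod_isUnit fun u hu ↦ ?_).ne_zero hW
  obtain ⟨⟨_, b⟩, -, rfl⟩ := List.mem_map.mp hu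
  cases b <;> simp

end Magnus

theorem mk_notMem_lowerCentralSeries {γ : Type*} {E : List (γ × Bool)}
    (hE : (E.map Prod.fst).IsChain (· ≠ ·)) (hne : E ≠ []) :
    mk E ∉ (⊤ : Subgroup (FreeGroup γ)).lowerCentralSeries E.length := fun hx ↦
  magnusHom_mk_ne_one (R := ℤ) hE hne
    (magnusHom_eq_one_of_mem_lowerCentralSeries hE (by rwa [List.length_map]))

variable {α : Type*}

def doubleLetter : α × Bool → List ((α ⊕ α) × Bool)
  | (a, true) => [(.inl a, true), (.inr a, true)]
  | (a, false) => [(.inr a, false), (.inl a, false)]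

def doubling : FreeGroup α →* FreeGroup (α ⊕ α) :=
  lift fun a ↦ of (.inl a) * of (.inr a)

theorem doubling_mk (L : List (α × Bool)) : doubling (mk L) = mk (L.flatMap doubleLetter) := by
  induction L with
  | nil => rfl
  | cons p L ih =>
    obtain ⟨a, b⟩ := p
    have hsplit : mk ((a, b) :: L) = mk [(a, b)] * mk L := by rw [mul_mk]; rfl
    rw [hsplit, _root_.map_mul, ih, List.flatMap_cons, ← mul_mk]
    congr 1
    cases b
    · exact congrArg (·⁻¹) (lift_apply_of (f := fun a ↦ of (Sum.inl a) * of (Sum.inr a)))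
    · exact lift_apply_of

theorem isChain_map_fst_flatMap_doubleLetter :
    ∀ {L : List (α × Bool)}, IsReduced L →
      ((L.flatMap doubleLetter).map Prod.fst).IsChain (· ≠ ·)
  | [], _ => by simp
  | [(a, b)], _ => by cases b <;> simp [doubleLetter]
  | (a, b) :: (c, e) :: L, hL => by
    have ih := isChain_map_fst_flatMap_doubleLetter (isReduced_cons_cons.mp hL).2
    have hac := (isReduced_cons_cons.mp hL).1
    cases b <;> cases e <;> simp_all [doubleLetter]

theorem exists_doubling_notMem_lowerCentralSeries {x : FreeGroup α} (hx : x ≠ 1) :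
    ∃ n, doubling x ∉ (⊤ : Subgroup (FreeGroup (α ⊕ α))).lowerCentralSeries n := by
  classical
  have hne : x.toWord.flatMap doubleLetter ≠ [] := by
    obtain ⟨⟨a, b⟩, hp⟩ := List.exists_mem_of_ne_nil _ (toWord_eq_nil_iff.not.mpr hx)
    simp only [ne_eq, List.flatMap_eq_nil_iff, not_forall]
    exact ⟨_, hp, by cases b <;> simp [doubleLetter]⟩
  rw [← mk_toWord (x := x), doubling_mk]
  exact ⟨_, mk_notMem_lowerCentralSeries
    (isChain_map_fst_flatMap_doubleLetter isReduced_toWord) hne⟩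

end FreeGroup

open FreeGroup in
/-- The free group on any alphabet `α` is residually nilpotent: the intersection of its
lower central series subgroups is trivial.

(Note: Mathlib's `lowerCentralSeries F d` is `Γ_{d+1} F` in the paper's indexing, so ranging
over all `d : ℕ` is the same as ranging over all `d ≥ 1` in the paper.) -/
theorem freeGroup_residually_nilpotent (α : Type*) :
    (⨅ d : ℕ, (⊤ : Subgroup (FreeGroup α)).lowerCentralSeries d) = ⊥ := by
  refine (Subgroup.eq_bot_iff_forall _).mpr fun x hx ↦ ?_
  by_contra hx1
  obtain ⟨n, hn⟩ := exists_doubling_notMem_lowerCentralSeries hx1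
  have hdx := Subgroup.mem_map_of_mem doubling (Subgroup.mem_iInf.mp hx n)
  rw [Subgroup.map_lowerCentralSeries] at hdx
  exact hn (Subgroup.lowerCentralSeries_mono n le_top hdx)
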